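/- arXiv:1907.00575 — 9 statements merged into one kernel-verified Lean document; each statement's English description precedes it below -/
import Mathlib

section
/- Let X and Y be real normed spaces and let Δ : S(X) → S(Y) be a surjective isometry between their unit spheres, i.e. Δ is surjective and ‖Δ(x) − Δ(x')‖ = ‖x − x'‖ for all x, x' ∈ S(X). Suppose there are an index set I and families (φ_i)_{i∈I} of functionals in the closed unit ball of X* and (ψ_i)_{i∈I} in the closed unit ball of Y* such that φ_i(x) = ψ_i(Δ(x)) for every i ∈ I and every x ∈ S(X), and such that the family (φ_i) is norming for X, i.e. ‖x‖ = sup_{i∈I} |φ_i(x)| for all x ∈ X. Then there exists a surjective real-linear isometry T : X → Y with T(x) = Δ(x) for every x ∈ S(X). -/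
/-- **Mori–Ozawa / Fang–Wang lemma.** If `Δ` is a surjective isometry between the unit
spheres of real normed spaces `X` and `Y`, and there are families `(φ i)` in the closed
unit ball of `X*` and `(ψ i)` in the closed unit ball of `Y*` with `φ i = ψ i ∘ Δ` on the
sphere and `(φ i)` norming for `X`, then `Δ` extends to a surjective real-linear isometry. -/
theorem stmt0 {X Y : Type*} [NormedAddCommGroup X] [NormedSpace ℝ X]
    [NormedAddCommGroup Y] [NormedSpace ℝ Y]
    (Δ : {x : X // ‖x‖ = 1} → {y : Y // ‖y‖ = 1})
    (hsurj : Function.Surjective Δ)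
    (hiso : ∀ x x' : {x : X // ‖x‖ = 1}, ‖(Δ x : Y) - (Δ x' : Y)‖ = ‖(x : X) - (x' : X)‖)
    {I : Type*} (φ : I → X →L[ℝ] ℝ) (ψ : I → Y →L[ℝ] ℝ)
    (hφ : ∀ i, ‖φ i‖ ≤ 1) (hψ : ∀ i, ‖ψ i‖ ≤ 1)
    (heq : ∀ (i : I) (x : {x : X // ‖x‖ = 1}), φ i (x : X) = ψ i (Δ x : Y))
    (hnorming : ∀ x : X, ‖x‖ = ⨆ i, |φ i x|) :
    ∃ T : X →ₗ[ℝ] Y, Function.Surjective T ∧ (∀ x : X, ‖T x‖ = ‖x‖) ∧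
      ∀ x : {x : X // ‖x‖ = 1}, T (x : X) = (Δ x : Y) := by
  classical
  -- normalization map into the sphere
  have hsph : ∀ (x : X), x ≠ 0 → ‖(‖x‖⁻¹ • x)‖ = 1 := by
    intro x hx
    rw [norm_smul, norm_inv, norm_norm, inv_mul_cancel₀ (norm_ne_zero_iff.mpr hx)]
  set f : X → Y := fun x =>
    if h : x = 0 then 0 else ‖x‖ • (Δ ⟨‖x‖⁻¹ • x, hsph x h⟩ : Y) with hf
  -- key compatibility: ψ i (f x) = φ i x
  have hcompat : ∀ (i : I) (x : X), ψ i (f x) = φ i x := by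
    intro i x
    by_cases h : x = 0
    · simp [hf, h]
    · simp only [hf, dif_neg h]
      rw [map_smul, smul_eq_mul, ← heq i ⟨‖x‖⁻¹ • x, hsph x h⟩]
      rw [← smul_eq_mul, ← map_smul, smul_smul,
        mul_inv_cancel₀ (norm_ne_zero_iff.mpr h), one_smul]
  -- ⨆ of zero is zero (works whether or not I is empty)
  have hzero : (⨆ _ : I, (0:ℝ)) = 0 := by
    have := hnorming 0
    simpa using this.symm
  -- ψ is norming on Y
  have hψnorming : ∀ y : Y, ‖y‖ = ⨆ i, |ψ i y| := by
    intro y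
    by_cases hy : y = 0
    · simp [hy, hzero]
    · set u : {y : Y // ‖y‖ = 1} := ⟨‖y‖⁻¹ • y, by
        rw [norm_smul, norm_inv, norm_norm, inv_mul_cancel₀ (norm_ne_zero_iff.mpr hy)]⟩
      obtain ⟨x, hx⟩ := hsurj u
      have h1 : (1:ℝ) = ⨆ i, |φ i (x : X)| := by
        have := hnorming (x : X)
        rwa [x.2] at this
      have h2 : ∀ i, |φ i (x : X)| = ‖y‖⁻¹ * |ψ i y| := by
        intro i
        rw [heq i x, hx]
        show |ψ i (‖y‖⁻¹ • y)| = _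
        rw [map_smul, smul_eq_mul, abs_mul, abs_inv, abs_norm]
      have h3 : (1:ℝ) = ‖y‖⁻¹ * ⨆ i, |ψ i y| := by
        rw [Real.mul_iSup_of_nonneg (by positivity), h1]
        exact iSup_congr h2
      have hny : (0:ℝ) < ‖y‖ := norm_pos_iff.mpr hy
      field_simp at h3
      linarith [h3]
  -- if all ψ i vanish on z, then z = 0
  have hsep : ∀ z : Y, (∀ i, ψ i z = 0) → z = 0 := by
    intro z hz
    have : ‖z‖ = 0 := by
      rw [hψnorming z]
      calc (⨆ i, |ψ i z|) = ⨆ _ : I, (0:ℝ) := iSup_congr fun i => by rw [hz i, abs_zero]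
        _ = 0 := hzero
    exact norm_eq_zero.mp this
  -- additivity
  have hadd : ∀ x y : X, f (x + y) = f x + f y := by
    intro x y
    have : f (x + y) - (f x + f y) = 0 := by
      apply hsep
      intro i
      simp [map_sub, map_add, hcompat i]
    exact sub_eq_zero.mp this
  -- homogeneity
  have hsmul : ∀ (c : ℝ) (x : X), f (c • x) = c • f x := by
    intro c x
    have : f (c • x) - c • f x = 0 := by
      apply hsep
      intro i
      simp [map_sub, map_smul, hcompat]
    exact sub_eq_zero.mp this
  refine ⟨{ toFun := f, map_add' := hadd, map_smul' := hsmul }, ?_, ?_, ?_⟩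
  · -- surjectivity
    intro y
    by_cases hy : y = 0
    · exact ⟨0, by simp [hf, hy]⟩
    · set u : {y : Y // ‖y‖ = 1} := ⟨‖y‖⁻¹ • y, by
        rw [norm_smul, norm_inv, norm_norm, inv_mul_cancel₀ (norm_ne_zero_iff.mpr hy)]⟩
      obtain ⟨x, hx⟩ := hsurj u
      refine ⟨‖y‖ • (x : X), ?_⟩
      show f (‖y‖ • (x : X)) = y
      have hx0 : (x : X) ≠ 0 := by
        intro h
        have h2 := x.2
        rw [h, norm_zero] at h2
        exact zero_ne_one h2
      have hxy : ‖y‖ • (x : X) ≠ 0 :=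
        smul_ne_zero (norm_ne_zero_iff.mpr hy) hx0
      simp only [hf, dif_neg hxy]
      have hn : ‖‖y‖ • (x : X)‖ = ‖y‖ := by
        rw [norm_smul, norm_norm, x.2, mul_one]
      have harg : (⟨‖(‖y‖ • (x:X))‖⁻¹ • (‖y‖ • (x:X)), hsph _ hxy⟩ :
          {x : X // ‖x‖ = 1}) = x := by
        ext
        simp only [hn, smul_smul, inv_mul_cancel₀ (norm_ne_zero_iff.mpr hy), one_smul]
      rw [harg, hn, hx]
      show ‖y‖ • (‖y‖⁻¹ • y) = y
      rw [smul_smul, mul_inv_cancel₀ (norm_ne_zero_iff.mpr hy), one_smul]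
  · -- isometry
    intro x
    by_cases h : x = 0
    · simp [hf, h]
    · show ‖f x‖ = ‖x‖
      simp only [hf, dif_neg h]
      rw [norm_smul, norm_norm, (Δ _).2, mul_one]
  · -- extends Δ
    intro x
    have hx0 : (x : X) ≠ 0 := by
      intro h
      have h2 := x.2
      rw [h, norm_zero] at h2
      exact zero_ne_one h2
    show f (x : X) = (Δ x : Y)
    simp only [hf, dif_neg hx0]
    have harg : (⟨‖(x:X)‖⁻¹ • (x:X), hsph _ hx0⟩ : {x : X // ‖x‖ = 1}) = x := by
      ext
      simp [x.2]
    rw [harg, x.2, one_smul]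
end

section
/- If x ∈ M₂(ℂ) is hermitian (x* = x) with tr(x) = 0, then ‖x‖² = Re(tr(x* x))/2, and for every t ∈ ℝ one has ‖t·1 + x‖ = |t| + ‖x‖. (Thus the hermitian 2×2 matrices decompose as ℝ·1 ⊕¹ H, where H, the traceless hermitian matrices, is a real Hilbert space whose norm is the normalized Hilbert–Schmidt norm.) -/
/-!
By Cayley–Hamilton a traceless `2 × 2` matrix squares to `-det x • 1`; for hermitian `x` this
is `xᴴ * x`, so the C*-identity gives `‖x‖² = -det x = tr (xᴴ x) / 2`. The eigenvalues of `x`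
are the roots of `r² + det x`, namely `±‖x‖`, so `t ± ‖x‖` both lie in the spectrum of
`t • 1 + x`; the spectral bound for the one of modulus `|t| + ‖x‖` matches the triangle
inequality.
-/

open Matrix
open scoped Matrix.Norms.L2Operator ComplexOrder

theorem Matrix.mul_self_fin_two {R : Type*} [CommRing R] (A : Matrix (Fin 2) (Fin 2) R) :
    A * A = A.trace • A - A.det • (1 : Matrix (Fin 2) (Fin 2) R) := by
  ext i j
  fin_cases i <;> fin_cases j <;> simp [mul_apply, det_fin_two, trace_fin_two] <;> ring

theorem Matrix.mem_spectrum_fin_two_iff {K : Type*} [Field K] {A : Matrix (Fin 2) (Fin 2) K}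
    {r : K} :
    r ∈ spectrum K A ↔ r ^ 2 - A.trace * r + A.det = 0 := by
  simp [mem_spectrum_iff_isRoot_charpoly, charpoly_fin_two]

theorem norm_ofReal_smul_one_add_eq_abs_add_norm {A : Type*} [NormedRing A] [NormedAlgebra ℂ A]
    [CompleteSpace A] [NormOneClass A] {a : A} (hpos : (‖a‖ : ℂ) ∈ spectrum ℂ a)
    (hneg : -(‖a‖ : ℂ) ∈ spectrum ℂ a) (t : ℝ) : ‖(t : ℂ) • (1 : A) + a‖ = |t| + ‖a‖ := by
  refine le_antisymm ?_ ?_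
  · calc ‖(t : ℂ) • (1 : A) + a‖ ≤ ‖(t : ℂ) • (1 : A)‖ + ‖a‖ := norm_add_le _ _
      _ = |t| + ‖a‖ := by simp
  · obtain ⟨s, hs, hts⟩ : ∃ s : ℝ, (s : ℂ) ∈ spectrum ℂ a ∧ |t + s| = |t| + ‖a‖ := by
      rcases le_total 0 t with ht | ht
      · exact ⟨‖a‖, hpos, by rw [abs_of_nonneg ht, abs_of_nonneg (by positivity)]⟩
      · refine ⟨-‖a‖, by exact_mod_cast hneg, ?_⟩
        rw [abs_of_nonpos ht, abs_of_nonpos (by linarith [norm_nonneg a])]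
        ring
    have hmem : ((t + s : ℝ) : ℂ) ∈ spectrum ℂ ((t : ℂ) • (1 : A) + a) := by
      rw [← Algebra.algebraMap_eq_smul_one, Complex.ofReal_add, add_comm (t : ℂ)]
      exact spectrum.add_mem_add_iff.mpr hs
    have := spectrum.norm_le_norm_of_mem hmem
    rwa [Complex.norm_real, Real.norm_eq_abs, hts] at this


theorem Matrix.conjTranspose_mul_self_eq_neg_det_smul_one {x : Matrix (Fin 2) (Fin 2) ℂ}
    (hherm : xᴴ = x) (htr : x.trace = 0) :
    xᴴ * x = -x.det • (1 : Matrix (Fin 2) (Fin 2) ℂ) := by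
  rw [hherm, mul_self_fin_two, htr, zero_smul, zero_sub, neg_smul]

theorem Matrix.ofReal_norm_sq_eq_neg_det {x : Matrix (Fin 2) (Fin 2) ℂ}
    (hherm : xᴴ = x) (htr : x.trace = 0) : (‖x‖ : ℂ) ^ 2 = -x.det := by
  have hxx := conjTranspose_mul_self_eq_neg_det_smul_one hherm htr
  have hnonneg : 0 ≤ -x.det := by
    have h := (posSemidef_conjTranspose_mul_self x).trace_nonneg
    rw [hxx, trace_smul, trace_one, Fintype.card_fin, smul_eq_mul] at h
    push_cast at h
    have h2 : (0 : ℂ) ≤ 2⁻¹ := by positivity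
    simpa using mul_nonneg h h2
  rw [← Complex.ofReal_pow, sq, ← l2_opNorm_conjTranspose_mul_self, hxx, norm_smul, norm_one,
    mul_one, Complex.norm_of_nonneg' hnonneg]

/-- For a hermitian `2 × 2` complex matrix `x` with zero trace one has
`‖x‖² = Re (tr (x* x)) / 2` and `‖t•1 + x‖ = |t| + ‖x‖` for every real `t`,
where the norm is the C*-norm (the operator norm induced by the Euclidean
norm on `ℂ²`).  Thus the hermitian matrices decompose as `ℝ·1 ⊕¹ H`, with
`H` the traceless hermitian matrices equipped with the normalized
Hilbert–Schmidt norm. -/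
theorem stmt1 (x : Matrix (Fin 2) (Fin 2) ℂ)
    (hherm : x.conjTranspose = x) (htr : x.trace = 0) :
    ‖x‖ ^ 2 = ((x.conjTranspose * x).trace.re) / 2 ∧
    ∀ t : ℝ, ‖(t : ℂ) • (1 : Matrix (Fin 2) (Fin 2) ℂ) + x‖ = |t| + ‖x‖ := by
  have hnorm_sq := ofReal_norm_sq_eq_neg_det hherm htr
  have hmem : ∀ s : ℂ, s ^ 2 = ‖x‖ ^ 2 → s ∈ spectrum ℂ x := fun s hs ↦ by
    rw [mem_spectrum_fin_two_iff, htr]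
    linear_combination hs + hnorm_sq
  refine ⟨?_, norm_ofReal_smul_one_add_eq_abs_add_norm (hmem _ rfl) (hmem _ (neg_sq _))⟩
  rw [conjTranspose_mul_self_eq_neg_det_smul_one hherm htr, trace_smul, trace_one,
    ← hnorm_sq, Fintype.card_fin, smul_eq_mul]
  norm_cast
  simp
end

section
/- If x ∈ M₂(ℂ) satisfies ‖x‖ = 1, ‖1 + x‖ = 2 and ‖1 − x‖ = 2, then x is hermitian (x* = x) and tr(x) = 0. -/
/-!
Let `T` be a contraction with `‖1 + T‖ = 2`. If `v` is a vector of the unit ball at which `1 + T`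
attains its norm, then `‖v + T v‖ = 2` forces `re ⟪T v, v⟫ ≥ ‖v‖²`, which for `‖T v‖ ≤ ‖v‖` is
only possible if `T v = v`. The adjoint is again a contraction and `⟪T† v, v⟫ = ⟪v, T v⟫ = ‖v‖²`,
so also `T† v = v`. Applied to `-T`, the condition `‖1 - T‖ = 2` gives `w ≠ 0` with
`T w = T† w = -w`. In dimension two, `v` and `w` form a basis, on which `T` and `T†` agree and
`T` has trace `1 + (-1) = 0`.
-/

open scoped Matrix.Norms.L2Operator InnerProductSpace

open Module Metric RCLike

theorem ContinuousLinearMap.exists_norm_le_one_norm_apply_eq_opNorm {𝕜 E F : Type*}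
    [DenselyNormedField 𝕜] [NormedAddCommGroup E] [NormedSpace 𝕜 E] [ProperSpace E]
    [SeminormedAddCommGroup F] [NormedSpace 𝕜 F] (f : E →L[𝕜] F) :
    ∃ v, ‖v‖ ≤ 1 ∧ ‖f v‖ = ‖f‖ := by
  have hmem := ((isCompact_closedBall (0 : E) 1).image (continuous_norm.comp f.continuous)).sSup_mem
    ((nonempty_closedBall.mpr zero_le_one).image _)
  obtain ⟨v, hv, hfv⟩ := f.sSup_unitClosedBall_eq_norm ▸ hmem
  exact ⟨v, mem_closedBall_zero_iff.mp hv, hfv⟩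

theorem LinearMap.trace_eq_sum_of_apply_basis_eq_smul {R M ι : Type*} [CommRing R]
    [AddCommGroup M] [Module R M] [Fintype ι] [DecidableEq ι] (b : Basis ι R M)
    {f : M →ₗ[R] M} {μ : ι → R} (h : ∀ i, f (b i) = μ i • b i) :
    trace R M f = ∑ i, μ i := by
  have hf : f = Matrix.toLin b b (Matrix.diagonal μ) :=
    b.ext fun i => by simp [Matrix.toLin_self, Matrix.diagonal_apply, h]
  rw [hf, Matrix.trace_toLin_eq, Matrix.trace_diagonal]

theorem Module.End.exists_basis_of_hasEigenvector_of_finrank_eq_two {K V : Type*} [Field K]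
    [AddCommGroup V] [Module K V] (hV : finrank K V = 2) {f : End K V} {a c : K} {v w : V}
    (hac : a ≠ c) (hv : f.HasEigenvector a v) (hw : f.HasEigenvector c w) :
    ∃ b : Basis (Fin 2) K V, b 0 = v ∧ b 1 = w := by
  have hli : LinearIndependent K ![v, w] :=
    f.eigenvectors_linearIndependent' ![a, c]
      (by intro i j; fin_cases i <;> fin_cases j <;> simp [hac, hac.symm]) _
      (by intro i; fin_cases i <;> assumption)
  have hcard : Fintype.card (Fin 2) = finrank K V := by simp [hV]
  have : FiniteDimensional K V := Module.finite_of_finrank_eq_succ hV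
  refine ⟨basisOfLinearIndependentOfCardEqFinrank hli hcard, ?_, ?_⟩ <;>
    simp [coe_basisOfLinearIndependentOfCardEqFinrank]

section InnerProductSpace

variable {𝕜 E : Type*} [RCLike 𝕜] [NormedAddCommGroup E] [InnerProductSpace 𝕜 E]

theorem eq_of_norm_le_of_norm_sq_le_re_inner {u v : E} (hu : ‖u‖ ≤ ‖v‖)
    (h : ‖v‖ ^ 2 ≤ re ⟪u, v⟫_𝕜) : u = v := by
  rw [← sub_eq_zero, ← norm_eq_zero, ← sq_eq_zero_iff]
  refine le_antisymm ?_ (sq_nonneg _)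
  rw [@norm_sub_sq 𝕜]
  nlinarith [norm_nonneg u]

theorem ContinuousLinearMap.exists_apply_eq_self_and_adjoint_apply_eq_self [ProperSpace E]
    {T : E →L[𝕜] E} (hT : ‖T‖ ≤ 1) (h : ‖1 + T‖ = 2) :
    ∃ v, v ≠ 0 ∧ T v = v ∧ adjoint T v = v := by
  obtain ⟨v, hv, hv_max⟩ := (1 + T).exists_norm_le_one_norm_apply_eq_opNorm
  rw [h, add_apply, one_apply_eq_self] at hv_max
  have hTv_le : ‖T v‖ ≤ ‖v‖ := T.le_of_opNorm_le hT v |>.trans_eq (one_mul _)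
  have hT'v_le : ‖adjoint T v‖ ≤ ‖v‖ := by
    refine (adjoint T).le_of_opNorm_le ?_ v |>.trans_eq (one_mul _)
    rwa [LinearIsometryEquiv.norm_map]
  have hre : ‖v‖ ^ 2 ≤ re ⟪T v, v⟫_𝕜 := by
    have := @norm_add_sq 𝕜 _ _ _ _ v (T v)
    rw [hv_max, inner_re_symm] at this
    nlinarith [norm_nonneg v, norm_nonneg (T v)]
  have hfix : T v = v := eq_of_norm_le_of_norm_sq_le_re_inner hTv_le hre
  refine ⟨v, ?_, hfix, eq_of_norm_le_of_norm_sq_le_re_inner (𝕜 := 𝕜) hT'v_le ?_⟩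
  · rintro rfl
    simp at hv_max
  · rw [adjoint_inner_left, hfix, inner_self_eq_norm_sq]

theorem ContinuousLinearMap.isSymmetric_and_trace_eq_zero_of_finrank_eq_two
    (hE : finrank 𝕜 E = 2) {T : E →L[𝕜] E} (hT : ‖T‖ ≤ 1) (hplus : ‖1 + T‖ = 2)
    (hminus : ‖1 - T‖ = 2) :
    (T : E →ₗ[𝕜] E).IsSymmetric ∧ LinearMap.trace 𝕜 E T = 0 := by
  have : FiniteDimensional 𝕜 E := Module.finite_of_finrank_eq_succ hE
  have : ProperSpace E := FiniteDimensional.proper_rclike 𝕜 E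
  obtain ⟨v, hv0, hTv, hT'v⟩ := exists_apply_eq_self_and_adjoint_apply_eq_self hT hplus
  obtain ⟨w, hw0, hTw, hT'w⟩ := exists_apply_eq_self_and_adjoint_apply_eq_self (T := -T)
    (by rwa [norm_neg]) (by rwa [← sub_eq_add_neg])
  rw [neg_apply, neg_eq_iff_eq_neg] at hTw
  rw [map_neg, neg_apply, neg_eq_iff_eq_neg] at hT'w
  obtain ⟨b, rfl, rfl⟩ := Module.End.exists_basis_of_hasEigenvector_of_finrank_eq_two hE
    (f := T) (a := 1) (c := -1) (by norm_num) ⟨by simpa using hTv, hv0⟩ ⟨by simpa using hTw, hw0⟩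
  have hTb : ∀ i, T (b i) = (![1, -1] : Fin 2 → 𝕜) i • b i := by
    intro i; fin_cases i <;> simp [hTv, hTw]
  have hT'b : ∀ i, adjoint T (b i) = (![1, -1] : Fin 2 → 𝕜) i • b i := by
    intro i; fin_cases i <;> simp [hT'v, hT'w]
  refine ⟨isSelfAdjoint_iff_isSymmetric.mp ?_, ?_⟩
  · exact coe_injective (b.ext fun i => (hT'b i).trans (hTb i).symm)
  · rw [LinearMap.trace_eq_sum_of_apply_basis_eq_smul b hTb]
    simp

end InnerProductSpace

/-- If a `2 × 2` complex matrix `x` satisfies `‖x‖ = 1`, `‖1 + x‖ = 2` and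
`‖1 - x‖ = 2` (C*-norm, i.e. the operator norm induced by the Euclidean norm
on `ℂ²`), then `x` is hermitian with zero trace. -/
theorem stmt2 (x : Matrix (Fin 2) (Fin 2) ℂ)
    (hx : ‖x‖ = 1)
    (hplus : ‖(1 : Matrix (Fin 2) (Fin 2) ℂ) + x‖ = 2)
    (hminus : ‖(1 : Matrix (Fin 2) (Fin 2) ℂ) - x‖ = 2) :
    x.conjTranspose = x ∧ x.trace = 0 := by
  let Φ := Matrix.toEuclideanCLM (n := Fin 2) (𝕜 := ℂ)
  obtain ⟨hsymm, htrace⟩ :=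
    (Φ x).isSymmetric_and_trace_eq_zero_of_finrank_eq_two finrank_euclideanSpace_fin
      hx.le (by rwa [← map_one Φ, ← map_add]) (by rwa [← map_one Φ, ← map_sub])
  refine ⟨Matrix.isSymmetric_toEuclideanLin_iff.mp hsymm, ?_⟩
  rwa [← Matrix.trace_toLin_eq x (PiLp.basisFun 2 ℂ (Fin 2))]
end

section
/- Let Y be a real normed space and let G : ℂ → Y be a continuous mapping which is positively homogeneous (G(r·z) = r·G(z) for all real r ≥ 0 and all z ∈ ℂ), satisfies G(−z) = −G(z) for all z ∈ ℂ, and satisfies G(a + b) = G(a) + G(b) whenever a, b ∈ ℂ have |a| = |b|. Then G is real-linear; explicitly, G(z) = Re(z)·G(1) + Im(z)·G(i) for every z ∈ ℂ. -/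
open ComplexConjugate

theorem map_real_smul_of_nonneg_of_odd {E F : Type*} [AddCommGroup E] [Module ℝ E]
    [AddCommGroup F] [Module ℝ F] {G : E → F}
    (hhom : ∀ (r : ℝ), 0 ≤ r → ∀ x : E, G (r • x) = r • G x)
    (hodd : ∀ x : E, G (-x) = -G x) (r : ℝ) (x : E) : G (r • x) = r • G x := by
  rcases le_or_gt 0 r with hr | hr
  · exact hhom r hr x
  · rw [← neg_neg (r • x), ← neg_smul, hodd, hhom (-r) (by linarith), neg_smul, neg_neg]

theorem Complex.add_conj_eq_smul_one (z : ℂ) : z + conj z = (2 * z.re) • (1 : ℂ) := by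
  rw [Complex.add_conj, Complex.real_smul, mul_one, Complex.ofReal_mul, Complex.ofReal_ofNat]

theorem Complex.add_neg_conj_eq_smul_I (z : ℂ) : z + -conj z = (2 * z.im) • Complex.I := by
  rw [← sub_eq_add_neg, Complex.sub_conj, Complex.real_smul, Complex.ofReal_mul,
    Complex.ofReal_ofNat]

theorem stmt3_general {Y : Type*} [NormedAddCommGroup Y] [NormedSpace ℝ Y]
    (G : ℂ → Y)
    (hhom : ∀ (r : ℝ), 0 ≤ r → ∀ z : ℂ, G (r • z) = r • G z)
    (hodd : ∀ z : ℂ, G (-z) = -G z)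
    (hadd : ∀ a b : ℂ, ‖a‖ = ‖b‖ → G (a + b) = G a + G b) :
    ∀ z : ℂ, G z = z.re • G 1 + z.im • G Complex.I := by
  have hsmul := map_real_smul_of_nonneg_of_odd hhom hodd
  intro z
  -- `z` has the same modulus as `conj z` and `-conj z`, whose sums with `z` are `2 Re z` and `2i Im z`.
  have hre : G (z + conj z) = G z + G (conj z) := hadd _ _ (Complex.norm_conj z).symm
  have him : G (z + -conj z) = G z + G (-conj z) :=
    hadd _ _ (by rw [norm_neg, Complex.norm_conj])
  have htwice : (2 : ℝ) • G z = (2 : ℝ) • (z.re • G 1 + z.im • G Complex.I) :=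
    calc (2 : ℝ) • G z = G (z + conj z) + G (z + -conj z) := by
          rw [hre, him, hodd, two_smul]; abel
      _ = (2 * z.re) • G 1 + (2 * z.im) • G Complex.I := by
          rw [Complex.add_conj_eq_smul_one, Complex.add_neg_conj_eq_smul_I, hsmul, hsmul]
      _ = (2 : ℝ) • (z.re • G 1 + z.im • G Complex.I) := by rw [smul_add, smul_smul, smul_smul]
  exact smul_right_injective Y two_ne_zero htwice

/-- A continuous, positively homogeneous, odd map `G : ℂ → Y` into a real normed
space which is additive on pairs of complex numbers of equal modulus is real-linear:
`G z = Re z • G 1 + Im z • G i` for every `z`. -/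
theorem stmt3 {Y : Type*} [NormedAddCommGroup Y] [NormedSpace ℝ Y]
    (G : ℂ → Y) (hcont : Continuous G)
    (hhom : ∀ (r : ℝ), 0 ≤ r → ∀ z : ℂ, G (r • z) = r • G z)
    (hodd : ∀ z : ℂ, G (-z) = -G z)
    (hadd : ∀ a b : ℂ, ‖a‖ = ‖b‖ → G (a + b) = G a + G b) :
    ∀ z : ℂ, G z = z.re • G 1 + z.im • G Complex.I :=
  stmt3_general G hhom hodd hadd
end

section
/- Let H be a real inner product space and let b, c, x ∈ H with ‖b‖ = ‖c‖ = ‖x‖ = 1 and b + c ≠ 0. If ‖ ‖b+c‖·x − b ‖ = 1 and ‖ ‖b+c‖·x − c ‖ = 1, then ⟨x, b⟩ = ⟨x, c⟩ = ‖b+c‖/2 and ‖b+c‖·x = b + c, i.e. x = (b+c)/‖b+c‖. -/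
open scoped InnerProductSpace

/-- In a real inner product space, if `b, c, x` are unit vectors with `b + c ≠ 0` and
`‖‖b+c‖•x - b‖ = ‖‖b+c‖•x - c‖ = 1`, then `⟨x,b⟩ = ⟨x,c⟩ = ‖b+c‖/2` and
`‖b+c‖•x = b + c`, i.e. `x = (b+c)/‖b+c‖`. -/
theorem stmt4 {H : Type*} [NormedAddCommGroup H] [InnerProductSpace ℝ H]
    (b c x : H) (hb : ‖b‖ = 1) (hc : ‖c‖ = 1) (hx : ‖x‖ = 1) (hbc : b + c ≠ 0)
    (h1 : ‖‖b + c‖ • x - b‖ = 1) (h2 : ‖‖b + c‖ • x - c‖ = 1) :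
    ⟪x, b⟫_ℝ = ‖b + c‖ / 2 ∧ ⟪x, c⟫_ℝ = ‖b + c‖ / 2 ∧ ‖b + c‖ • x = b + c := by
  set t : ℝ := ‖b + c‖ with ht
  have htpos : 0 < t := norm_pos_iff.mpr hbc
  have hsmul : ‖t • x‖ = t := by
    rw [norm_smul, hx, Real.norm_of_nonneg htpos.le, mul_one]
  have e1 : ‖t • x - b‖ ^ 2 = ‖t • x‖ ^ 2 - 2 * ⟪t • x, b⟫_ℝ + ‖b‖ ^ 2 :=
    @norm_sub_sq_real _ _ _ _ _
  have e2 : ‖t • x - c‖ ^ 2 = ‖t • x‖ ^ 2 - 2 * ⟪t • x, c⟫_ℝ + ‖c‖ ^ 2 :=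
    @norm_sub_sq_real _ _ _ _ _
  rw [h1, hsmul, hb, real_inner_smul_left] at e1
  rw [h2, hsmul, hc, real_inner_smul_left] at e2
  have hib : ⟪x, b⟫_ℝ = t / 2 := by
    field_simp at e1 ⊢
    nlinarith [e1]
  have hic : ⟪x, c⟫_ℝ = t / 2 := by
    field_simp at e2 ⊢
    nlinarith [e2]
  refine ⟨hib, hic, ?_⟩
  have hz : ‖t • x - (b + c)‖ ^ 2 = 0 := by
    rw [@norm_sub_sq_real, hsmul, real_inner_smul_left, inner_add_right, hib, hic, ht]
    have : ‖b + c‖ ^ 2 = ‖b + c‖ ^ 2 := rfl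
    ring
  have := pow_eq_zero_iff (n := 2) (by norm_num) |>.mp hz
  have := norm_eq_zero.mp this
  exact sub_eq_zero.mp this
end

section
/- Let e₁, e₂ ∈ H be unitary tripotents of the spin factor, i.e. {e_j, e_j, x} = x for all x ∈ H (j = 1, 2). Then there exist a ℂ-linear unitary operator U : H → H commuting with the conjugation J (U∘J = J∘U) and a complex number α with |α| = 1 such that α·U(e₁) = e₂. -/
open scoped InnerProductSpace

/-- The inner product `⟨x|y⟩` of the paper: linear in `x`, conjugate-linear in `y`
(Mathlib's `⟪·,·⟫_ℂ` is conjugate-linear in the first variable). -/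
noncomputable def sip {H : Type*} [NormedAddCommGroup H] [InnerProductSpace ℂ H]
    (x y : H) : ℂ := ⟪y, x⟫_ℂ

/-- The spin factor triple product `{x,y,z} = ⟨x|y⟩z + ⟨z|y⟩x − ⟨x|Jz⟩Jy`
associated with a conjugation `J`. -/
noncomputable def tp {H : Type*} [NormedAddCommGroup H] [InnerProductSpace ℂ H]
    (J : H → H) (x y z : H) : H :=
  sip x y • z + sip z y • x - sip x (J z) • J y

/-- The spin norm `‖x‖_sp = √(⟨x|x⟩ + √(⟨x|x⟩² − |⟨x|Jx⟩|²))`. -/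
noncomputable def spNorm {H : Type*} [NormedAddCommGroup H] [InnerProductSpace ℂ H]
    (J : H → H) (x : H) : ℝ :=
  Real.sqrt ((sip x x).re + Real.sqrt ((sip x x).re ^ 2 - ‖sip x (J x)‖ ^ 2))

/-!
Evaluating `{e,e,x} = x` at `x = J e` gives `J e = β • e` with `β = ⟪e, J e⟫`, so `|β| = 1`,
and evaluating it at any `x ≠ 0` gives `‖e‖ = 1`. For a square root `γ` of `β`, the unit vector
`γ • e` is fixed by `J`. Two unit vectors `u₁, u₂` fixed by `J` have real inner product, so the
reflection in the hyperplane orthogonal to `u₁ - u₂` exchanges them, and it commutes with `J`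
because `u₁ - u₂` is fixed by `J`.
-/

open scoped ComplexConjugate
open Submodule RCLike

theorem Submodule.reflection_sub_of_inner_comm {𝕜 E : Type*} [RCLike 𝕜] [NormedAddCommGroup E]
    [InnerProductSpace 𝕜 E] {v w : E} (h : ‖v‖ = ‖w‖) (hvw : ⟪v, w⟫_𝕜 = ⟪w, v⟫_𝕜) :
    reflection (𝕜 ∙ (v - w))ᗮ v = w := by
  set R := reflection (𝕜 ∙ (v - w))ᗮ
  have h_sub : R (v - w) = -(v - w) := reflection_orthogonalComplement_singleton_eq_neg (v - w)
  have h_add : R (v + w) = v + w := by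
    refine reflection_mem_subspace_eq_self (mem_orthogonal_singleton_iff_inner_left.mpr ?_)
    rw [inner_add_left, inner_sub_right, inner_sub_right, inner_self_eq_norm_sq_to_K,
      inner_self_eq_norm_sq_to_K, h, hvw]
    ring
  rw [map_sub] at h_sub
  rw [map_add] at h_add
  linear_combination (norm := module) (2⁻¹ : 𝕜) • (h_sub + h_add)

structure IsConjugation {H : Type*} [NormedAddCommGroup H] [InnerProductSpace ℂ H]
    (J : H → H) : Prop where
  map_add : ∀ x y : H, J (x + y) = J x + J y
  map_smul : ∀ (c : ℂ) (x : H), J (c • x) = conj c • J x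
  norm_map : ∀ x : H, ‖J x‖ = ‖x‖
  involutive : Function.Involutive J

def IsUnitaryTripotent {H : Type*} [NormedAddCommGroup H] [InnerProductSpace ℂ H]
    (J : H → H) (e : H) : Prop :=
  ∀ x : H, tp J e e x = x

section

variable {H : Type*} [NormedAddCommGroup H] [InnerProductSpace ℂ H] {J : H → H}

namespace IsConjugation

def toLinearMap (hJ : IsConjugation J) : H →ₗ⋆[ℂ] H where
  toFun := J
  map_add' := hJ.map_add
  map_smul' := hJ.map_smul

@[simp]
theorem toLinearMap_apply (hJ : IsConjugation J) (x : H) : hJ.toLinearMap x = J x := rfl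

theorem map_sub (hJ : IsConjugation J) (x y : H) : J (x - y) = J x - J y :=
  hJ.toLinearMap.map_sub x y

theorem re_inner_map_map (hJ : IsConjugation J) (x y : H) :
    re ⟪J x, J y⟫_ℂ = re ⟪x, y⟫_ℂ := by
  rw [re_inner_eq_norm_add_mul_self_sub_norm_sub_mul_self_div_four,
    re_inner_eq_norm_add_mul_self_sub_norm_sub_mul_self_div_four, ← hJ.map_add, ← hJ.map_sub,
    hJ.norm_map, hJ.norm_map]

theorem inner_map_map (hJ : IsConjugation J) (x y : H) : ⟪J x, J y⟫_ℂ = ⟪y, x⟫_ℂ := by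
  have h_im := hJ.re_inner_map_map (Complex.I • x) y
  rw [hJ.map_smul, inner_smul_left, inner_smul_left] at h_im
  simp only [Complex.conj_I, map_neg, neg_neg, re_to_complex, Complex.mul_re, Complex.I_re,
    Complex.I_im, zero_mul, one_mul, zero_sub, neg_mul] at h_im
  rw [← inner_conj_symm y x]
  apply Complex.ext
  · rw [Complex.conj_re, ← re_to_complex, hJ.re_inner_map_map, re_to_complex]
  · rw [Complex.conj_im]
    linarith

theorem exists_norm_eq_one_and_map_smul_eq (hJ : IsConjugation J) {e : H} {β : ℂ}
    (hβ : ‖β‖ = 1) (he : J e = β • e) : ∃ γ : ℂ, ‖γ‖ = 1 ∧ J (γ • e) = γ • e := by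
  obtain ⟨γ, hγ⟩ := IsAlgClosed.exists_pow_nat_eq β two_pos
  have hγ_norm : ‖γ‖ = 1 :=
    (pow_eq_one_iff_of_nonneg (norm_nonneg γ) two_ne_zero).mp (by rw [← norm_pow, hγ, hβ])
  refine ⟨γ, hγ_norm, ?_⟩
  rw [hJ.map_smul, he, smul_smul, ← hγ]
  congr 1
  calc conj γ * γ ^ 2 = (conj γ * γ) * γ := by ring
    _ = γ := by rw [Complex.conj_mul', hγ_norm]; simp

theorem reflection_map_comm (hJ : IsConjugation J) {v : H} (hv : J v = v) (x : H) :
    reflection (ℂ ∙ v)ᗮ (J x) = J (reflection (ℂ ∙ v)ᗮ x) := by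
  have hvx : ⟪v, J x⟫_ℂ = conj ⟪v, x⟫_ℂ := by
    rw [← hv, hJ.inner_map_map, hv, inner_conj_symm]
  rw [reflection_orthogonal_apply, reflection_orthogonal_apply, reflection_singleton_apply,
    reflection_singleton_apply, ← hJ.toLinearMap_apply (-_), map_neg, LinearMap.map_sub,
    map_nsmul, map_smulₛₗ, toLinearMap_apply, toLinearMap_apply, hv, hvx, map_div₀, map_pow,
    RCLike.conj_ofReal]

theorem exists_linearIsometryEquiv_map_eq (hJ : IsConjugation J) {u₁ u₂ : H}
    (hu₁ : J u₁ = u₁) (hu₂ : J u₂ = u₂) (h : ‖u₁‖ = ‖u₂‖) :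
    ∃ U : H ≃ₗᵢ[ℂ] H, (∀ x, U (J x) = J (U x)) ∧ U u₁ = u₂ := by
  refine ⟨reflection (ℂ ∙ (u₁ - u₂))ᗮ, hJ.reflection_map_comm (by rw [hJ.map_sub, hu₁, hu₂]),
    reflection_sub_of_inner_comm h ?_⟩
  conv_lhs => rw [← hu₁, ← hu₂, hJ.inner_map_map]

end IsConjugation

namespace IsUnitaryTripotent

variable {e : H}

theorem map_eq_smul (hJ : IsConjugation J) (he : IsUnitaryTripotent J e) :
    J e = ⟪e, J e⟫_ℂ • e := by
  have h := he (J e)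
  simp only [tp, sip, hJ.involutive e] at h
  rw [add_sub_cancel_left] at h
  exact h.symm

theorem ne_zero [Nontrivial H] (he : IsUnitaryTripotent J e) : e ≠ 0 := by
  rintro rfl
  obtain ⟨x, hx⟩ := exists_ne (0 : H)
  exact hx ((he x).symm.trans (by simp [tp, sip]))

theorem norm_inner_map [Nontrivial H] (hJ : IsConjugation J) (he : IsUnitaryTripotent J e) :
    ‖⟪e, J e⟫_ℂ‖ = 1 := by
  have h := congrArg norm (he.map_eq_smul hJ)
  rw [norm_smul, hJ.norm_map] at h
  exact (mul_eq_right₀ (norm_ne_zero_iff.mpr he.ne_zero)).mp h.symm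

theorem norm_eq_one [Nontrivial H] (hJ : IsConjugation J) (he : IsUnitaryTripotent J e) :
    ‖e‖ = 1 := by
  obtain ⟨x, hx⟩ := exists_ne (0 : H)
  set β := ⟪e, J e⟫_ℂ
  have hβe : J e = β • e := he.map_eq_smul hJ
  have hβ : conj β * β = 1 := by rw [Complex.conj_mul', he.norm_inner_map hJ]; simp
  have h_coeff : ⟪J x, e⟫_ℂ = conj β * ⟪e, x⟫_ℂ := by
    conv_lhs => rw [← hJ.involutive e]
    rw [hJ.inner_map_map, hβe, inner_smul_left]
  have h := he x
  simp only [tp, sip] at h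
  rw [h_coeff, hβe, smul_smul, mul_right_comm, hβ, one_mul, add_sub_cancel_right] at h
  have h_inner : ⟪e, e⟫_ℂ = 1 :=
    (smul_left_injective ℂ hx).eq_iff.mp (h.trans (one_smul ℂ x).symm)
  have h_sq : ‖e‖ ^ 2 = 1 := by rw [← inner_self_eq_norm_sq (𝕜 := ℂ), h_inner, one_re]
  exact (pow_eq_one_iff_of_nonneg (norm_nonneg e) two_ne_zero).mp h_sq

end IsUnitaryTripotent

end

/-- Any two unitary tripotents of the spin factor are interchanged by a map of the form
`x ↦ α • U x` with `U` a ℂ-linear unitary commuting with the conjugation and `|α| = 1`. -/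
theorem stmt8 {H : Type*} [NormedAddCommGroup H] [InnerProductSpace ℂ H]
    (J : H → H)
    (hJadd : ∀ x y : H, J (x + y) = J x + J y)
    (hJsmul : ∀ (c : ℂ) (x : H), J (c • x) = (starRingEnd ℂ) c • J x)
    (hJiso : ∀ x : H, ‖J x‖ = ‖x‖)
    (hJinv : ∀ x : H, J (J x) = x)
    (e₁ e₂ : H)
    (h₁ : ∀ x : H, tp J e₁ e₁ x = x)
    (h₂ : ∀ x : H, tp J e₂ e₂ x = x) :
    ∃ (U : H →ₗ[ℂ] H) (α : ℂ), Function.Bijective U ∧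
      (∀ x y : H, ⟪U x, U y⟫_ℂ = ⟪x, y⟫_ℂ) ∧
      (∀ x : H, U (J x) = J (U x)) ∧
      ‖α‖ = 1 ∧ α • U e₁ = e₂ := by
  have hJ : IsConjugation J := ⟨hJadd, hJsmul, hJiso, hJinv⟩
  have h₁ : IsUnitaryTripotent J e₁ := h₁
  have h₂ : IsUnitaryTripotent J e₂ := h₂
  rcases subsingleton_or_nontrivial H with hH | hH
  · exact ⟨LinearMap.id, 1, Function.bijective_id, fun _ _ => rfl, fun _ => rfl, norm_one,
      Subsingleton.elim _ _⟩
  obtain ⟨γ₁, hγ₁, hu₁⟩ :=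
    hJ.exists_norm_eq_one_and_map_smul_eq (h₁.norm_inner_map hJ) (h₁.map_eq_smul hJ)
  obtain ⟨γ₂, hγ₂, hu₂⟩ :=
    hJ.exists_norm_eq_one_and_map_smul_eq (h₂.norm_inner_map hJ) (h₂.map_eq_smul hJ)
  obtain ⟨U, hUJ, hU⟩ := hJ.exists_linearIsometryEquiv_map_eq hu₁ hu₂ (by
    rw [norm_smul, norm_smul, hγ₁, hγ₂, h₁.norm_eq_one hJ, h₂.norm_eq_one hJ])
  refine ⟨U.toLinearMap, conj γ₂ * γ₁, U.bijective, U.inner_map_map, hUJ, by simp [hγ₁, hγ₂], ?_⟩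
  calc (conj γ₂ * γ₁) • U e₁ = conj γ₂ • U (γ₁ • e₁) := by rw [map_smul, mul_smul]
    _ = (conj γ₂ * γ₂) • e₂ := by rw [hU, smul_smul]
    _ = e₂ := by rw [Complex.conj_mul', hγ₂]; simp
end

section
/- Let e ∈ X⁻ with ⟨e|e⟩ = 1 and let x ∈ H. Then {i·e, x, i·e} = x if and only if there exist a ∈ H and t ∈ ℝ with Ja = a, ⟨a|e⟩ = 0 and x = a − t·(i·e); moreover, for such x one has ‖x‖_sp = ‖a‖₂ + |t|. -/
open scoped InnerProductSpace

/-! With `u = i·e` one has `J u = -u` and `‖u‖ = 1`, so the triple product collapses to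
`{u, x, u} = 2⟨x|u⟩ u + J x`. Applying the involution `J` to the fixed-point equation
`J x = x - 2⟨x|u⟩ u` forces `⟨x|u⟩` to be real, and then `a := x - ⟨x|u⟩ u` is `J`-fixed and
orthogonal to `u`. For `x = a - t u` with such an `a`, `⟨x|x⟩ = ‖a‖² + t²` and
`⟨x|Jx⟩ = ‖a‖² - t²`, so the inner square root in the spin norm is `2‖a‖|t|` and the outer one
is `‖a‖ + |t|`. -/

open ComplexConjugate

section

variable {H : Type*} [NormedAddCommGroup H] [InnerProductSpace ℂ H]

theorem sip_eq_zero_iff_inner_I_smul_eq_zero {a e : H} :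
    sip a e = 0 ↔ ⟪a, Complex.I • e⟫_ℂ = 0 := by
  rw [sip, inner_smul_right, mul_eq_zero, inner_eq_zero_symm]
  simp [Complex.I_ne_zero]

theorem conj_eq_of_map_eq_sub_smul {M : Type*} [AddCommGroup M] [Module ℂ M]
    {J : M →ₗ⋆[ℂ] M} (hJ : Function.Involutive J) {u : M} (hu : u ≠ 0) (hJu : J u = -u)
    {x : M} {c : ℂ} (hJx : J x = x - c • u) : conj c = c := by
  have h : (conj c - c) • u = 0 := by
    have hJJx := congrArg J hJx
    rw [hJ x, map_sub, map_smulₛₗ, hJu, hJx] at hJJx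
    rw [sub_smul]
    linear_combination (norm := module) -hJJx
  exact sub_eq_zero.mp ((smul_eq_zero.mp h).resolve_right hu)

variable {J : H →ₗ⋆[ℂ] H} {u : H}

theorem tp_sandwich_of_map_eq_neg (hJu : J u = -u) (hu : ‖u‖ = 1) (y : H) :
    tp J u y u = (2 * ⟪y, u⟫_ℂ) • u + J y := by
  have huJu : sip u (J u) = -1 := by
    rw [sip, hJu, inner_neg_left, inner_self_eq_one_of_norm_eq_one hu]
  rw [tp, huJu]
  simp only [sip]
  module

theorem map_sub_ofReal_smul (hJu : J u = -u) (a : H) (t : ℝ) :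
    J (a - (t : ℂ) • u) = J a + (t : ℂ) • u := by
  rw [map_sub, map_smulₛₗ, hJu, Complex.conj_ofReal, smul_neg, sub_neg_eq_add]

theorem tp_eq_self_iff (hJ : Function.Involutive J) (hJu : J u = -u) (hu : ‖u‖ = 1)
    (x : H) : tp J u x u = x ↔
      ∃ (a : H) (t : ℝ), J a = a ∧ ⟪a, u⟫_ℂ = 0 ∧ x = a - (t : ℂ) • u := by
  have huu : ⟪u, u⟫_ℂ = 1 := inner_self_eq_one_of_norm_eq_one hu
  rw [tp_sandwich_of_map_eq_neg hJu hu]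
  constructor
  · intro h
    set c := ⟪x, u⟫_ℂ
    have hJx : J x = x - (2 * c) • u := eq_sub_of_add_eq' h
    have hc : (c.re : ℂ) = c := by
      have h2c := conj_eq_of_map_eq_sub_smul hJ (norm_ne_zero_iff.mp (hu ▸ one_ne_zero)) hJu hJx
      rw [map_mul, map_ofNat] at h2c
      exact Complex.conj_eq_iff_re.mp (mul_left_cancel₀ two_ne_zero h2c)
    refine ⟨x - c • u, -c.re, ?_, ?_, ?_⟩
    · rw [← hc, map_sub_ofReal_smul hJu, hJx, hc]
      module
    · rw [inner_sub_left, inner_smul_left, huu, ← hc, Complex.conj_ofReal, mul_one, hc]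
      exact sub_self c
    · rw [Complex.ofReal_neg, hc]
      module
  · rintro ⟨a, t, hJa, hau, rfl⟩
    rw [map_sub_ofReal_smul hJu, hJa, inner_sub_left, inner_smul_left, hau, huu,
      Complex.conj_ofReal]
    module

theorem spNorm_eq_add_of_sq {x : H} {p q : ℝ} (hp : 0 ≤ p) (hq : 0 ≤ q)
    (hxx : (sip x x).re = p ^ 2 + q ^ 2) (hxJx : ‖sip x (J x)‖ = |p ^ 2 - q ^ 2|) :
    spNorm J x = p + q := by
  have hinner : (p ^ 2 + q ^ 2) ^ 2 - |p ^ 2 - q ^ 2| ^ 2 = (2 * p * q) ^ 2 := by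
    rw [sq_abs]
    ring
  have houter : p ^ 2 + q ^ 2 + 2 * p * q = (p + q) ^ 2 := by ring
  rw [spNorm, hxx, hxJx, hinner, Real.sqrt_sq (by positivity), houter,
    Real.sqrt_sq (by positivity)]

theorem inner_add_smul_sub_smul {a : H} (hau : ⟪a, u⟫_ℂ = 0) (hu : ‖u‖ = 1) (s t : ℝ) :
    ⟪a + (s : ℂ) • u, a - (t : ℂ) • u⟫_ℂ = ((‖a‖ ^ 2 - s * t : ℝ) : ℂ) := by
  have hua : ⟪u, a⟫_ℂ = 0 := inner_eq_zero_symm.mp hau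
  rw [inner_add_left, inner_sub_right, inner_sub_right, inner_smul_left, inner_smul_right,
    inner_smul_right, inner_smul_left, hau, hua, inner_self_eq_one_of_norm_eq_one hu,
    inner_self_eq_norm_sq_to_K, Complex.conj_ofReal]
  simp only [Complex.coe_algebraMap, Complex.ofReal_sub, Complex.ofReal_pow, Complex.ofReal_mul]
  ring

theorem spNorm_sub_ofReal_smul (hJu : J u = -u) (hu : ‖u‖ = 1) {a : H} (hJa : J a = a)
    (hau : ⟪a, u⟫_ℂ = 0) (t : ℝ) : spNorm J (a - (t : ℂ) • u) = ‖a‖ + |t| := by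
  apply spNorm_eq_add_of_sq (norm_nonneg a) (abs_nonneg t)
  · have h := inner_add_smul_sub_smul hau hu (-t) t
    rw [Complex.ofReal_neg, neg_smul, ← sub_eq_add_neg] at h
    rw [sip, h, Complex.ofReal_re, sq_abs]
    ring
  · rw [sip, map_sub_ofReal_smul hJu, hJa, inner_add_smul_sub_smul hau hu, Complex.norm_real,
      Real.norm_eq_abs, ← pow_two, sq_abs]

end

theorem stmt11_general {H : Type*} [NormedAddCommGroup H] [InnerProductSpace ℂ H]
    (J : H → H)
    (hJadd : ∀ x y : H, J (x + y) = J x + J y)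
    (hJsmul : ∀ (c : ℂ) (x : H), J (c • x) = (starRingEnd ℂ) c • J x)
    (hJinv : ∀ x : H, J (J x) = x)
    (e : H) (he : J e = e) (hee : sip e e = 1) (x : H) :
    (tp J (Complex.I • e) x (Complex.I • e) = x ↔
      ∃ (a : H) (t : ℝ), J a = a ∧ sip a e = 0 ∧ x = a - (t : ℂ) • (Complex.I • e)) ∧
    (∀ (a : H) (t : ℝ), J a = a → sip a e = 0 → x = a - (t : ℂ) • (Complex.I • e) →
      spNorm J x = ‖a‖ + |t|) := by
  let Jₗ : H →ₗ⋆[ℂ] H := ⟨⟨J, hJadd⟩, hJsmul⟩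
  have hJu : Jₗ (Complex.I • e) = -(Complex.I • e) := by
    rw [map_smulₛₗ, Complex.conj_I, neg_smul, show Jₗ e = e from he]
  have hu : ‖Complex.I • e‖ = 1 := by
    rw [norm_smul, Complex.norm_I, one_mul,
      ← pow_eq_one_iff_of_nonneg (norm_nonneg e) two_ne_zero,
      ← inner_self_eq_norm_sq (𝕜 := ℂ), ← sip, hee, RCLike.one_re]
  simp only [sip_eq_zero_iff_inner_I_smul_eq_zero]
  refine ⟨tp_eq_self_iff (J := Jₗ) hJinv hJu hu x, ?_⟩
  rintro a t hJa hau rfl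
  exact spNorm_sub_ofReal_smul (J := Jₗ) hJu hu hJa hau t

/-- Description of the self-adjoint part of the Peirce-2 space of the unitary tripotent
`i·e`, for a unit vector `e ∈ X⁻`: `{ie,x,ie} = x` iff `x = a − t•(ie)` with `a ∈ X⁻`,
`⟨a|e⟩ = 0` and `t ∈ ℝ`; for such `x` one has `‖x‖_sp = ‖a‖₂ + |t|`. -/
theorem stmt11 {H : Type*} [NormedAddCommGroup H] [InnerProductSpace ℂ H]
    (J : H → H)
    (hJadd : ∀ x y : H, J (x + y) = J x + J y)
    (hJsmul : ∀ (c : ℂ) (x : H), J (c • x) = (starRingEnd ℂ) c • J x)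
    (hJiso : ∀ x : H, ‖J x‖ = ‖x‖)
    (hJinv : ∀ x : H, J (J x) = x)
    (e : H) (he : J e = e) (hee : sip e e = 1) (x : H) :
    (tp J (Complex.I • e) x (Complex.I • e) = x ↔
      ∃ (a : H) (t : ℝ), J a = a ∧ sip a e = 0 ∧ x = a - (t : ℂ) • (Complex.I • e)) ∧
    (∀ (a : H) (t : ℝ), J a = a → sip a e = 0 → x = a - (t : ℂ) • (Complex.I • e) →
      spNorm J x = ‖a‖ + |t|) :=
  stmt11_general J hJadd hJsmul hJinv e he hee x
end

section
/- Let e, c, d ∈ X⁻ be orthonormal in H (⟨e|e⟩ = ⟨c|c⟩ = ⟨d|d⟩ = 1, ⟨e|c⟩ = ⟨e|d⟩ = ⟨c|d⟩ = 0). Define ι on 2×2 complex matrices by ι(m) := ((m₁₁ + m₂₂)/2)·e + ((m₁₁ − m₂₂)/(2i))·c + (m₁₂/i)·d. Then ι(1) = e, and for all symmetric matrices m, n, p ∈ M₂(ℂ) (mᵀ = m, nᵀ = n, pᵀ = p): (i) ι((m n* p + p n* m)/2) = {ι(m), ι(n), ι(p)}; (ii) ‖ι(m)‖_sp equals the C*-norm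 ‖m‖ of m; (iii) ⟨ι(m)|ι(m)⟩ = Re(tr(m* m))/2, i.e. ι is an isometry from the symmetric matrices with the normalized Hilbert–Schmidt norm into (H, ‖·‖₂). -/
open scoped InnerProductSpace

open scoped Matrix.Norms.L2Operator

/-! In the orthonormal basis `e, c, d` of `J`-fixed vectors, `⟨·|·⟩`, `J` and the triple product
become the coordinate formulas of the spin factor `ℂ³`: `⟨x|y⟩ = ∑ xᵢ ȳᵢ`, `Jx = x̄`,
`⟨x|Jx⟩ = ∑ xᵢ²`. For symmetric `m` the coordinates of `ι m` satisfy `∑ |xᵢ|² = tr(m*m)/2` and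
`∑ xᵢ² = det m`, and the triple identity is a polynomial identity in the entries. The C*-norm
squared of a `2 × 2` matrix is the larger eigenvalue `t + √(t² - |det m|²)`, `t = tr(m*m)/2`, of
`m*m`, which is the square of the spin norm of `ι m`: bound the Hermitian form of `m*m` on `ℂ²`
by AM-GM and exhibit an eigenvector. -/

open scoped ComplexConjugate
open Complex Matrix

section HermitianForm

variable (p r : ℝ) (q : ℂ)

/-- The Hermitian form of `!![p, q; conj q, r]` at `(u, v)`. -/
noncomputable def hermForm (u v : ℂ) : ℝ :=
  p * normSq u + r * normSq v + 2 * (q * conj u * v).re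

/-- The larger eigenvalue of `!![p, q; conj q, r]`. -/
noncomputable def topEigenvalue : ℝ :=
  (p + r) / 2 + √(((p - r) / 2) ^ 2 + normSq q)

variable {p r q}

lemma topEigenvalue_spec :
    p ≤ topEigenvalue p r q ∧ r ≤ topEigenvalue p r q ∧
      (topEigenvalue p r q - p) * (topEigenvalue p r q - r) = normSq q := by
  have hD := Real.sq_sqrt (add_nonneg (sq_nonneg ((p - r) / 2)) (normSq_nonneg q))
  have habs : |(p - r) / 2| ≤ √(((p - r) / 2) ^ 2 + normSq q) :=
    Real.abs_le_sqrt (le_add_of_nonneg_right (normSq_nonneg q))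
  rw [abs_le] at habs
  refine ⟨by unfold topEigenvalue; linarith, by unfold topEigenvalue; linarith, ?_⟩
  unfold topEigenvalue
  linear_combination hD

lemma hermForm_le_topEigenvalue_mul (u v : ℂ) :
    hermForm p r q u v ≤ topEigenvalue p r q * (normSq u + normSq v) := by
  obtain ⟨hp, hr, hprod⟩ := topEigenvalue_spec (p := p) (r := r) (q := q)
  set lam := topEigenvalue p r q
  have hre : (q * conj u * v).re ^ 2 ≤ normSq q * normSq u * normSq v := by
    calc (q * conj u * v).re ^ 2 ≤ normSq (q * conj u * v) := by
          rw [normSq_apply]; nlinarith [sq_nonneg (q * conj u * v).im]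
      _ = normSq q * normSq u * normSq v := by simp only [normSq_mul, normSq_conj]
  -- AM-GM for the two nonnegative terms `(λ - p)|u|²` and `(λ - r)|v|²`, whose product is `|q ū v|²`
  have hX := mul_nonneg (sub_nonneg.2 hp) (normSq_nonneg u)
  have hY := mul_nonneg (sub_nonneg.2 hr) (normSq_nonneg v)
  have hXY : ((lam - p) * normSq u) * ((lam - r) * normSq v) = normSq q * normSq u * normSq v := by
    rw [← hprod]; ring
  unfold hermForm
  nlinarith [sq_nonneg ((lam - p) * normSq u - (lam - r) * normSq v)]

lemma exists_hermForm_eq_topEigenvalue_mul :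
    ∃ u v : ℂ, (u, v) ≠ 0 ∧ hermForm p r q u v = topEigenvalue p r q * (normSq u + normSq v) := by
  obtain ⟨hp, hr, hprod⟩ := topEigenvalue_spec (p := p) (r := r) (q := q)
  set lam := topEigenvalue p r q
  by_cases hq : q = 0
  · subst hq
    rcases mul_eq_zero.mp (hprod.trans normSq_zero) with h | h
    · exact ⟨1, 0, by simp, by
      simp only [hermForm, map_one, mul_one, map_zero, mul_zero, add_zero, zero_re]
      linarith⟩
    · exact ⟨0, 1, by simp, by
      simp only [hermForm, map_zero, mul_zero, map_one, mul_one, zero_add, zero_re, add_zero]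
      linarith⟩
  · -- `(q, λ - p)` is an eigenvector of `!![p, q; conj q, r]` for `λ`
    refine ⟨q, (lam - p : ℝ), by simp [hq], ?_⟩
    rw [hermForm, mul_conj, ← ofReal_mul, ofReal_re, normSq_ofReal]
    linear_combination (p - lam) * hprod

end HermitianForm

theorem ContinuousLinearMap.opNorm_eq_of_bound_of_eq {𝕜 E F : Type*} [NontriviallyNormedField 𝕜]
    [NormedAddCommGroup E] [NormedAddCommGroup F] [NormedSpace 𝕜 E] [NormedSpace 𝕜 F]
    (f : E →L[𝕜] F) {M : ℝ} (hM : 0 ≤ M) (hle : ∀ x, ‖f x‖ ≤ M * ‖x‖) {x : E} (hx : x ≠ 0)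
    (heq : ‖f x‖ = M * ‖x‖) : ‖f‖ = M :=
  (f.opNorm_le_bound hM hle).antisymm <|
    le_of_mul_le_mul_right (heq ▸ f.le_opNorm x) (norm_pos_iff.2 hx)

namespace Matrix

variable (m : Matrix (Fin 2) (Fin 2) ℂ)

lemma norm_sq_toEuclideanCLM_fin_two (x : EuclideanSpace ℂ (Fin 2)) :
    ‖toEuclideanCLM (n := Fin 2) (𝕜 := ℂ) m x‖ ^ 2 =
      hermForm ((mᴴ * m) 0 0).re ((mᴴ * m) 1 1).re ((mᴴ * m) 0 1) (x 0) (x 1) := by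
  simp only [EuclideanSpace.norm_sq_eq, Fin.sum_univ_two, Complex.sq_norm, hermForm,
    ofLp_toEuclideanCLM, mulVec, dotProduct, normSq_apply, add_re, mul_re, add_im, mul_im,
    mul_apply, conjTranspose_apply, RCLike.star_def, conj_re, conj_im]
  ring

lemma normSq_det_fin_two :
    normSq m.det = ((mᴴ * m) 0 0).re * ((mᴴ * m) 1 1).re - normSq ((mᴴ * m) 0 1) := by
  simp only [det_fin_two, normSq_apply, sub_re, mul_re, sub_im, mul_im, mul_apply,
    conjTranspose_apply, RCLike.star_def, Fin.sum_univ_two, add_re, conj_re, conj_im, add_im]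
  ring

theorem l2_opNorm_fin_two :
    ‖m‖ = √((mᴴ * m).trace.re / 2 + √(((mᴴ * m).trace.re / 2) ^ 2 - ‖m.det‖ ^ 2)) := by
  set p := ((mᴴ * m) 0 0).re
  set r := ((mᴴ * m) 1 1).re
  set q := (mᴴ * m) 0 1
  have hlam : (mᴴ * m).trace.re / 2 + √(((mᴴ * m).trace.re / 2) ^ 2 - ‖m.det‖ ^ 2)
      = topEigenvalue p r q := by
    have hs : (mᴴ * m).trace.re / 2 = (p + r) / 2 := by
      rw [trace_fin_two, add_re]
    have hD : ((p + r) / 2) ^ 2 - ‖m.det‖ ^ 2 = ((p - r) / 2) ^ 2 + normSq q := by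
      rw [← normSq_eq_norm_sq, normSq_det_fin_two]
      ring
    rw [hs, hD, topEigenvalue]
  rw [hlam, cstar_norm_def]
  set lam := topEigenvalue p r q
  set f := toEuclideanCLM (n := Fin 2) (𝕜 := ℂ) m
  have hf (x : EuclideanSpace ℂ (Fin 2)) : ‖f x‖ ^ 2 = hermForm p r q (x 0) (x 1) :=
    norm_sq_toEuclideanCLM_fin_two m x
  have hx (x : EuclideanSpace ℂ (Fin 2)) : ‖x‖ ^ 2 = normSq (x 0) + normSq (x 1) := by
    simp [EuclideanSpace.norm_sq_eq, Fin.sum_univ_two, Complex.sq_norm]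
  obtain ⟨u, v, huv, heq⟩ := exists_hermForm_eq_topEigenvalue_mul (p := p) (r := r) (q := q)
  set x₀ : EuclideanSpace ℂ (Fin 2) := WithLp.toLp 2 ![u, v]
  have hx₀ : x₀ ≠ 0 := by
    contrapose! huv
    simpa [x₀] using huv
  have hfx₀ : ‖f x₀‖ ^ 2 = hermForm p r q u v := hf x₀
  have hx₀' : ‖x₀‖ ^ 2 = normSq u + normSq v := hx x₀
  have hlam0 : 0 ≤ lam := by
    refine nonneg_of_mul_nonneg_left ?_ (hx₀' ▸ pow_pos (norm_pos_iff.2 hx₀) 2)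
    rw [← heq, ← hfx₀]
    positivity
  refine f.opNorm_eq_of_bound_of_eq (Real.sqrt_nonneg _) (fun x => ?_) hx₀ ?_
  · rw [← pow_le_pow_iff_left₀ (norm_nonneg _) (by positivity) two_ne_zero, mul_pow,
      Real.sq_sqrt hlam0, hf, hx]
    exact hermForm_le_topEigenvalue_mul _ _
  · rw [← sq_eq_sq₀ (norm_nonneg _) (by positivity), mul_pow, Real.sq_sqrt hlam0, hfx₀, hx₀']
    exact heq

end Matrix

section RealOrthonormalFamily

variable {H ι : Type*} [NormedAddCommGroup H] [InnerProductSpace ℂ H] [Fintype ι]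
  {J : H → H} {v : ι → H}

lemma sip_sum_smul (hv : Orthonormal ℂ v) (a b : ι → ℂ) :
    sip (∑ i, a i • v i) (∑ i, b i • v i) = ∑ i, a i * conj (b i) := by
  simp only [sip, hv.inner_sum, mul_comm]

lemma apply_sum_smul_of_conjLinear (hJadd : ∀ x y, J (x + y) = J x + J y)
    (hJsmul : ∀ (a : ℂ) x, J (a • x) = conj a • J x) (hJv : ∀ i, J (v i) = v i) (a : ι → ℂ) :
    J (∑ i, a i • v i) = ∑ i, conj (a i) • v i := by
  have hJsum := map_sum (AddMonoidHom.mk' J hJadd) (fun i => a i • v i) Finset.univ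
  simp only [AddMonoidHom.mk'_apply] at hJsum
  simp only [hJsum, hJsmul, hJv]

lemma tp_sum_smul (hv : Orthonormal ℂ v) (hJadd : ∀ x y, J (x + y) = J x + J y)
    (hJsmul : ∀ (a : ℂ) x, J (a • x) = conj a • J x) (hJv : ∀ i, J (v i) = v i)
    (a b c : ι → ℂ) :
    tp J (∑ i, a i • v i) (∑ i, b i • v i) (∑ i, c i • v i) =
      ∑ i, ((∑ j, a j * conj (b j)) * c i + (∑ j, c j * conj (b j)) * a i
        - (∑ j, a j * c j) * conj (b i)) • v i := by
  simp only [tp, apply_sum_smul_of_conjLinear hJadd hJsmul hJv, sip_sum_smul hv, conj_conj,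
    add_smul, sub_smul, Finset.sum_add_distrib, Finset.sum_sub_distrib, mul_smul,
    ← Finset.smul_sum]

end RealOrthonormalFamily

lemma orthonormal_of_sip {H : Type*} [NormedAddCommGroup H] [InnerProductSpace ℂ H] {e c d : H}
    (hee : sip e e = 1) (hcc : sip c c = 1) (hdd : sip d d = 1)
    (hec : sip e c = 0) (hed : sip e d = 0) (hcd : sip c d = 0) :
    Orthonormal ℂ ![e, c, d] := by
  unfold sip at *
  rw [orthonormal_iff_ite]
  intro i j
  fin_cases i <;> fin_cases j <;>
    simp [-inner_self_eq_norm_sq_to_K, hee, hcc, hdd, hec, hed, hcd, inner_eq_zero_symm.1 hec,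
      inner_eq_zero_symm.1 hed, inner_eq_zero_symm.1 hcd]

noncomputable def spinCoord (m : Matrix (Fin 2) (Fin 2) ℂ) : Fin 3 → ℂ :=
  ![(m 0 0 + m 1 1) / 2, I * (m 1 1 - m 0 0) / 2, -I * m 0 1]

lemma sum_spinCoord_smul {H : Type*} [AddCommGroup H] [Module ℂ H]
    (m : Matrix (Fin 2) (Fin 2) ℂ) (e c d : H) :
    ∑ i, spinCoord m i • ![e, c, d] i =
      ((m 0 0 + m 1 1) / 2) • e + ((m 0 0 - m 1 1) / (2 * I)) • c + (m 0 1 / I) • d := by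
  have hc : I * (m 1 1 - m 0 0) / 2 = (m 0 0 - m 1 1) / (2 * I) := by
    field_simp
    linear_combination (m 1 1 - m 0 0) * I_sq
  have hd : -I * m 0 1 = m 0 1 / I := by
    field_simp
    linear_combination (-m 0 1) * I_sq
  simp only [Fin.sum_univ_three, spinCoord, Matrix.cons_val, hc, hd]

section SymmetricMatrix

variable {m n p : Matrix (Fin 2) (Fin 2) ℂ}

lemma apply_one_zero_of_transpose_eq (hm : mᵀ = m) : m 1 0 = m 0 1 := by
  simpa using congrFun (congrFun hm 0) 1

lemma sum_spinCoord_mul_conj (hm : mᵀ = m) :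
    ∑ i, spinCoord m i * conj (spinCoord m i) = ((mᴴ * m).trace.re / 2 : ℝ) := by
  simp only [Fin.sum_univ_three, spinCoord, mul_conj, trace_fin_two, mul_apply, Fin.sum_univ_two,
    conjTranspose_apply, apply_one_zero_of_transpose_eq hm, Matrix.cons_val, RCLike.star_def,
    ← ofReal_add, ofReal_inj, add_re, mul_re, conj_re, conj_im, normSq_apply, div_re, div_im,
    add_im, sub_re, sub_im, neg_re, neg_im, I_re, I_im, re_ofNat, im_ofNat, mul_im]
  ring

lemma sum_spinCoord_sq (hm : mᵀ = m) : ∑ i, spinCoord m i * spinCoord m i = m.det := by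
  simp only [Fin.sum_univ_three, spinCoord, det_fin_two, apply_one_zero_of_transpose_eq hm,
    Matrix.cons_val]
  linear_combination ((m 0 0 - m 1 1) ^ 2 / 4 + m 0 1 ^ 2) * I_sq

lemma spinCoord_triple (hm : mᵀ = m) (hn : nᵀ = n) (hp : pᵀ = p) :
    spinCoord ((2 : ℂ)⁻¹ • (m * nᴴ * p + p * nᴴ * m)) = fun i =>
      (∑ j, spinCoord m j * conj (spinCoord n j)) * spinCoord p i
        + (∑ j, spinCoord p j * conj (spinCoord n j)) * spinCoord m i
        - (∑ j, spinCoord m j * spinCoord p j) * conj (spinCoord n i) := by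
  have hm' := apply_one_zero_of_transpose_eq hm
  have hn' := apply_one_zero_of_transpose_eq hn
  have hp' := apply_one_zero_of_transpose_eq hp
  funext i
  fin_cases i <;>
  · simp only [spinCoord, Fin.sum_univ_three, Fin.reduceFinMk, Matrix.cons_val,
      Matrix.smul_apply, Matrix.add_apply, mul_apply, Fin.sum_univ_two, conjTranspose_apply,
      RCLike.star_def, smul_eq_mul, hm', hn', hp', map_add, map_sub, map_mul, map_neg,
      map_div₀, conj_I, map_ofNat]
    ring_nf
    simp only [I_sq, I_pow_three]
    ring

end SymmetricMatrix

theorem stmt12_general {H : Type*} [NormedAddCommGroup H] [InnerProductSpace ℂ H]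
    (J : H → H)
    (hJadd : ∀ x y : H, J (x + y) = J x + J y)
    (hJsmul : ∀ (c : ℂ) (x : H), J (c • x) = (starRingEnd ℂ) c • J x)
    (e c d : H) (he : J e = e) (hc : J c = c) (hd : J d = d)
    (hee : sip e e = 1) (hcc : sip c c = 1) (hdd : sip d d = 1)
    (hec : sip e c = 0) (hed : sip e d = 0) (hcd : sip c d = 0)
    (ι : Matrix (Fin 2) (Fin 2) ℂ → H)
    (hι : ∀ m : Matrix (Fin 2) (Fin 2) ℂ,
      ι m = ((m 0 0 + m 1 1) / 2) • e + ((m 0 0 - m 1 1) / (2 * Complex.I)) • c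
        + (m 0 1 / Complex.I) • d) :
    ι 1 = e ∧
    (∀ m n p : Matrix (Fin 2) (Fin 2) ℂ, m.transpose = m → n.transpose = n →
      p.transpose = p →
      ι ((2 : ℂ)⁻¹ • (m * n.conjTranspose * p + p * n.conjTranspose * m))
        = tp J (ι m) (ι n) (ι p)) ∧
    (∀ m : Matrix (Fin 2) (Fin 2) ℂ, m.transpose = m → spNorm J (ι m) = ‖m‖) ∧
    (∀ m : Matrix (Fin 2) (Fin 2) ℂ, m.transpose = m →
      sip (ι m) (ι m) = (((m.conjTranspose * m).trace.re / 2 : ℝ) : ℂ)) := by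
  have hv := orthonormal_of_sip hee hcc hdd hec hed hcd
  have hJv : ∀ i, J (![e, c, d] i) = ![e, c, d] i := by
    intro i
    fin_cases i <;> assumption
  have hι' (m : Matrix (Fin 2) (Fin 2) ℂ) : ι m = ∑ i, spinCoord m i • ![e, c, d] i :=
    (hι m).trans (sum_spinCoord_smul m e c d).symm
  have hHS (m : Matrix (Fin 2) (Fin 2) ℂ) (hm : mᵀ = m) :
      sip (ι m) (ι m) = (((mᴴ * m).trace.re / 2 : ℝ) : ℂ) := by
    rw [hι', sip_sum_smul hv, sum_spinCoord_mul_conj hm]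
  refine ⟨by simp [hι], fun m n p hm hn hp => ?_, fun m hm => ?_, hHS⟩
  · rw [hι', hι', hι', hι', tp_sum_smul hv hJadd hJsmul hJv, spinCoord_triple hm hn hp]
  · have hdet : sip (ι m) (J (ι m)) = m.det := by
      rw [hι', apply_sum_smul_of_conjLinear hJadd hJsmul hJv, sip_sum_smul hv]
      simp only [conj_conj, sum_spinCoord_sq hm]
    rw [spNorm, hHS m hm, hdet, ofReal_re, Matrix.l2_opNorm_fin_two]

/-- Given an orthonormal triple `e, c, d` in `X⁻`, the map
`ι(m) = ((m₁₁+m₂₂)/2)·e + ((m₁₁−m₂₂)/(2i))·c + (m₁₂/i)·d` sends the identity to `e`,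
is a triple homomorphism on symmetric `2 × 2` matrices, is isometric from the C*-norm
to the spin norm, and is isometric from the normalized Hilbert–Schmidt norm to the
Hilbert norm `‖·‖₂`. -/
theorem stmt12 {H : Type*} [NormedAddCommGroup H] [InnerProductSpace ℂ H]
    (J : H → H)
    (hJadd : ∀ x y : H, J (x + y) = J x + J y)
    (hJsmul : ∀ (c : ℂ) (x : H), J (c • x) = (starRingEnd ℂ) c • J x)
    (hJiso : ∀ x : H, ‖J x‖ = ‖x‖)
    (hJinv : ∀ x : H, J (J x) = x)
    (e c d : H) (he : J e = e) (hc : J c = c) (hd : J d = d)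
    (hee : sip e e = 1) (hcc : sip c c = 1) (hdd : sip d d = 1)
    (hec : sip e c = 0) (hed : sip e d = 0) (hcd : sip c d = 0)
    (ι : Matrix (Fin 2) (Fin 2) ℂ → H)
    (hι : ∀ m : Matrix (Fin 2) (Fin 2) ℂ,
      ι m = ((m 0 0 + m 1 1) / 2) • e + ((m 0 0 - m 1 1) / (2 * Complex.I)) • c
        + (m 0 1 / Complex.I) • d) :
    ι 1 = e ∧
    (∀ m n p : Matrix (Fin 2) (Fin 2) ℂ, m.transpose = m → n.transpose = n →
      p.transpose = p →
      ι ((2 : ℂ)⁻¹ • (m * n.conjTranspose * p + p * n.conjTranspose * m))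
        = tp J (ι m) (ι n) (ι p)) ∧
    (∀ m : Matrix (Fin 2) (Fin 2) ℂ, m.transpose = m → spNorm J (ι m) = ‖m‖) ∧
    (∀ m : Matrix (Fin 2) (Fin 2) ℂ, m.transpose = m →
      sip (ι m) (ι m) = (((m.conjTranspose * m).trace.re / 2 : ℝ) : ℂ)) :=
  stmt12_general J hJadd hJsmul e c d he hc hd hee hcc hdd hec hed hcd ι hι
end

section
/- Let u ∈ M₂(ℂ) be a symmetric unitary matrix (u* u = 1 and uᵀ = u). Then there exist complex numbers c₁, c₂, d₁, d₂ of modulus 1 with c₁·d₂ = c₂·d₁ and t ∈ ℝ with 0 ≤ t ≤ 1 such that u = diag(conj(c₁), conj(c₂)) · [[t, √(1−t²)], [√(1−t²), −t]] · diag(conj(d₁), conj(d₂)). -/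
/-!
Write `u = !![a, b; b, d]`. Since `uᴴ = u⁻¹ = (det u)⁻¹ • adjugate u`, the second row of `u` is
`det u • (-conj b, conj a)`, so `b = -det u * conj b` and `d = det u * conj a`. The first identity
says that `b / conj b = -det u` when `b ≠ 0`, so some square root `μ` of `-det u` is a phase of `b`:
`b = |b| μ`. With `α` a phase of `a` and `t = |a|`, so that `|b| = √(1 - t²)`, this gives
`u = !![t α, √(1 - t²) μ; √(1 - t²) μ, -t μ² conj α]`, which is the factorization with
`(c₁, c₂) = (1, conj μ * α)` and `(d₁, d₂) = (conj α, conj μ)`.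
-/

open Matrix ComplexConjugate

lemma Complex.exists_sq_eq_of_norm_eq_one {ν : ℂ} (hν : ‖ν‖ = 1) :
    ∃ μ : ℂ, ‖μ‖ = 1 ∧ μ ^ 2 = ν := by
  obtain ⟨μ, hμ⟩ := IsAlgClosed.exists_pow_nat_eq ν two_pos
  refine ⟨μ, ?_, hμ⟩
  have : ‖μ‖ ^ 2 = 1 := by rw [← norm_pow, hμ, hν]
  nlinarith [norm_nonneg μ]

lemma Complex.exists_sq_eq_and_eq_norm_mul_of_eq_mul_conj {b ν : ℂ} (hν : ‖ν‖ = 1)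
    (hb : b = ν * conj b) : ∃ μ : ℂ, ‖μ‖ = 1 ∧ μ ^ 2 = ν ∧ b = ‖b‖ * μ := by
  rcases eq_or_ne b 0 with rfl | hb0
  · simpa using Complex.exists_sq_eq_of_norm_eq_one hν
  have hnb : (‖b‖ : ℂ) ≠ 0 := by simpa using hb0
  have hcb : conj b ≠ 0 := by simpa using hb0
  refine ⟨b / ‖b‖, by simp [hb0], ?_, by field_simp⟩
  field_simp
  rw [← Complex.mul_conj']
  linear_combination b * hb

lemma Matrix.fin_two_row_one_of_conjTranspose_mul_self_eq_one {u : Matrix (Fin 2) (Fin 2) ℂ}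
    (hu : uᴴ * u = 1) :
    u 1 1 = u.det * conj (u 0 0) ∧ u 1 0 = -(u.det * conj (u 0 1)) := by
  have hadj : u.adjugate = u.det • uᴴ :=
    calc u.adjugate = u.adjugate * (u * uᴴ) := by rw [mul_eq_one_comm.mp hu, mul_one]
      _ = u.det • uᴴ := by rw [← Matrix.mul_assoc, adjugate_mul, smul_one_mul]
  have h00 := congrFun (congrFun hadj 0) 0
  have h10 := congrFun (congrFun hadj 1) 0
  simp only [adjugate_fin_two, of_apply, cons_val', cons_val_zero, cons_val_one, empty_val',
    cons_val_fin_one, smul_apply, conjTranspose_apply, smul_eq_mul, RCLike.star_def] at h00 h10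
  exact ⟨h00, by linear_combination -h10⟩

lemma Matrix.fin_two_norm_sq_add_norm_sq_of_conjTranspose_mul_self_eq_one
    {u : Matrix (Fin 2) (Fin 2) ℂ} (hu : uᴴ * u = 1) : ‖u 0 0‖ ^ 2 + ‖u 1 0‖ ^ 2 = 1 := by
  have h := congrFun (congrFun hu 0) 0
  simp only [mul_apply, conjTranspose_apply, RCLike.star_def, Complex.conj_mul', Fin.sum_univ_two,
    one_apply_eq] at h
  exact_mod_cast h

/-- Every symmetric unitary `2 × 2` complex matrix `u` can be written as
`diag(c̄₁, c̄₂) · [[t, √(1−t²)], [√(1−t²), −t]] · diag(d̄₁, d̄₂)` with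
`|c₁| = |c₂| = |d₁| = |d₂| = 1`, `c₁d₂ = c₂d₁` and `t ∈ [0,1]`. -/
theorem stmt15 (u : Matrix (Fin 2) (Fin 2) ℂ)
    (hu : u.conjTranspose * u = 1) (hsymm : u.transpose = u) :
    ∃ (c₁ c₂ d₁ d₂ : ℂ) (t : ℝ),
      ‖c₁‖ = 1 ∧ ‖c₂‖ = 1 ∧
      ‖d₁‖ = 1 ∧ ‖d₂‖ = 1 ∧ c₁ * d₂ = c₂ * d₁ ∧
      0 ≤ t ∧ t ≤ 1 ∧
      u = Matrix.diagonal ![(starRingEnd ℂ) c₁, (starRingEnd ℂ) c₂] *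
          !![(t : ℂ), (Real.sqrt (1 - t ^ 2) : ℂ);
             (Real.sqrt (1 - t ^ 2) : ℂ), -(t : ℂ)] *
          Matrix.diagonal ![(starRingEnd ℂ) d₁, (starRingEnd ℂ) d₂] := by
  have hsym : u 1 0 = u 0 1 := congrFun (congrFun hsymm 0) 1
  obtain ⟨h11, h10⟩ := fin_two_row_one_of_conjTranspose_mul_self_eq_one hu
  have hdet : ‖-u.det‖ = 1 := by
    rw [norm_neg]
    exact CStarRing.norm_of_mem_unitary (det_of_mem_unitary (mem_unitaryGroup_iff'.mpr hu))
  obtain ⟨μ, hμ, hμ2, hbμ⟩ := Complex.exists_sq_eq_and_eq_norm_mul_of_eq_mul_conj hdet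
    (b := u 0 1) (by rw [neg_mul, ← h10, hsym])
  have hnorm := fin_two_norm_sq_add_norm_sq_of_conjTranspose_mul_self_eq_one hu
  rw [hsym] at hnorm
  set t := ‖u 0 0‖
  set s := ‖u 0 1‖
  set α := Complex.exp ((u 0 0).arg * Complex.I)
  have ha : u 0 0 = t * α := (Complex.norm_mul_exp_arg_mul_I _).symm
  have hα : ‖α‖ = 1 := Complex.norm_exp_ofReal_mul_I _
  have hαα : conj α * α = 1 := by simp [Complex.conj_mul', hα]
  have hs : √(1 - t ^ 2) = s := by rw [← hnorm, add_sub_cancel_left, Real.sqrt_sq (norm_nonneg _)]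
  refine ⟨1, conj μ * α, conj α, conj μ, t, norm_one, by simp [hμ, hα], by simp [hα], by simp [hμ],
    by linear_combination -(conj μ) * hαα, norm_nonneg _, by nlinarith [norm_nonneg (u 0 1)], ?_⟩
  ext i j
  fin_cases i <;> fin_cases j <;>
    simp only [Fin.zero_eta, Fin.mk_one, Fin.isValue, map_one, map_mul, Complex.conj_conj, hs,
      mul_diagonal, diagonal_mul, of_apply, cons_val', cons_val_zero, cons_val_one, cons_val_fin_one,
      one_mul, mul_neg, neg_mul]
  · exact ha
  · exact hbμ
  · rw [hsym, hbμ]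
    linear_combination (-(s * μ)) * hαα
  · rw [h11, ha, map_mul, Complex.conj_ofReal, ← neg_neg u.det, ← hμ2]
    ring
end
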